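/- arXiv:2605.29203 — 3 statements merged into one kernel-verified Lean document; each statement's English description precedes it below -/
import Mathlib

section
/- For every $a > 0$ and $\theta \in \mathbb{R}$: $\sum_{k\in\mathbb{Z}} \frac{e^{i k \theta}}{k^2 + a^2} = \frac{\pi}{a} \sum_{k\in\mathbb{Z}} e^{-a|2\pi k + \theta|}$. -/
open Real Complex MeasureTheory Filter Set Topology Asymptotics
open scoped FourierTransform

lemma my_integral_cexp_Ioi {c : ℂ} (hc : 0 < c.re) :
    ∫ x : ℝ in Ioi (0:ℝ), Complex.exp (-(c * x)) = 1 / c := by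
  have hc0 : c ≠ 0 := fun h => by simp [h] at hc
  have hint : IntegrableOn (fun x : ℝ => Complex.exp (-(c * x))) (Ioi 0) := by
    refine ((exp_neg_integrableOn_Ioi 0 hc).mono' ?_ ?_)
    · exact (Complex.continuous_exp.comp (by fun_prop)).aestronglyMeasurable
    · filter_upwards with x
      simp [Complex.norm_exp, Complex.mul_re]
  have h1 := intervalIntegral_tendsto_integral_Ioi 0 hint tendsto_id
  have h2 : Tendsto (fun T : ℝ => ∫ x in (0:ℝ)..T, Complex.exp (-(c * x)))
      atTop (𝓝 (1 / c)) := by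
    have heq : ∀ T : ℝ, (∫ x in (0:ℝ)..T, Complex.exp (-(c * x)))
        = (Complex.exp (-c * T) - 1) / (-c) := by
      intro T
      simpa [neg_mul] using integral_exp_mul_complex (a := (0:ℝ)) (b := T)
        (c := -c) (neg_ne_zero.2 hc0)
    simp_rw [heq]
    have h3 : Tendsto (fun T : ℝ => Complex.exp (-c * T)) atTop (𝓝 0) := by
      rw [tendsto_zero_iff_norm_tendsto_zero]
      have : Tendsto (fun T : ℝ => Real.exp (-(c.re * T))) atTop (𝓝 0) := by
        apply Real.tendsto_exp_atBot.comp
        exact (tendsto_neg_atBot_iff).2 (Tendsto.const_mul_atTop hc tendsto_id)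
      refine this.congr fun T => ?_
      simp [Complex.norm_exp, Complex.mul_re]
    have h4 : Tendsto (fun T : ℝ => (Complex.exp (-c * T) - 1) / (-c)) atTop
        (𝓝 ((0 - 1) / (-c))) := (h3.sub tendsto_const_nhds).div_const (-c)
    simpa using h4
  exact tendsto_nhds_unique h1 h2

section

variable {a : ℝ}

/-- The function whose Fourier transform is `1/(a^2+xi^2)`. -/
noncomputable def myf (a : ℝ) (x : ℝ) : ℂ :=
  ((π / a : ℝ) : ℂ) * Complex.exp (((-(2 * π * a * |x|) : ℝ) : ℂ))

lemma myf_cont : Continuous (myf a) := by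
  unfold myf; fun_prop

lemma myf_norm (x : ℝ) : ‖myf a x‖ = |π / a| * Real.exp (-(2 * π * a * |x|)) := by
  simp [myf, Complex.norm_exp, abs_div]

lemma integrable_exp_negabs {b : ℝ} (hb : 0 < b) :
    Integrable fun x : ℝ => Real.exp (-(b * |x|)) := by
  rw [← integrableOn_univ, ← @Iio_union_Ici _ _ (0 : ℝ), integrableOn_union,
    integrableOn_Ici_iff_integrableOn_Ioi]
  have hIoi : IntegrableOn (fun x : ℝ => Real.exp (-(b * |x|))) (Ioi 0) := by
    refine (exp_neg_integrableOn_Ioi 0 hb).congr_fun ?_ measurableSet_Ioi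
    intro x hx
    rw [Set.mem_Ioi] at hx
    simp only []
    rw [abs_of_pos hx, neg_mul]
  refine ⟨?_, hIoi⟩
  rw [← (Measure.measurePreserving_neg (volume : Measure ℝ)).integrableOn_comp_preimage
      (Homeomorph.neg ℝ).measurableEmbedding]
  simpa only [Function.comp_def, abs_neg, neg_preimage, neg_Iio, neg_zero] using hIoi

lemma integrable_aux (ha : 0 < a) (w : ℝ) :
    Integrable fun x : ℝ =>
      Complex.exp (((-2 * π * x * w : ℝ) : ℂ) * Complex.I) * myf a x := by
  have h2a : 0 < 2 * π * a := by positivity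
  refine ((integrable_exp_negabs h2a).const_mul |π / a|).mono' ?_ ?_
  · exact ((Complex.continuous_exp.comp (by fun_prop)).mul myf_cont).aestronglyMeasurable
  · filter_upwards with x
    rw [norm_mul, myf_norm]
    simp [Complex.norm_exp]

end

lemma fourier_myf {a : ℝ} (ha : 0 < a) (ξ : ℝ) :
    𝓕 (myf a) ξ = 1 / ((a : ℂ) ^ 2 + (ξ : ℂ) ^ 2) := by
  have hπ : (0:ℝ) < π := Real.pi_pos
  set cp : ℂ := 2 * π * ((a : ℂ) + (ξ : ℂ) * Complex.I) with hcp_def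
  set cm : ℂ := 2 * π * ((a : ℂ) - (ξ : ℂ) * Complex.I) with hcm_def
  have hcp_re : 0 < cp.re := by
    simp [hcp_def, Complex.mul_re]
    positivity
  have hcm_re : 0 < cm.re := by
    simp [hcm_def, Complex.mul_re]
    positivity
  have hint := integrable_aux ha ξ
  rw [Real.fourier_real_eq_integral_exp_smul]
  simp_rw [smul_eq_mul]
  rw [← setIntegral_univ, ← Set.Iic_union_Ioi (a := (0:ℝ)),
    setIntegral_union (Set.Iic_disjoint_Ioi le_rfl) measurableSet_Ioi
      hint.integrableOn hint.integrableOn]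
  have hIoi : ∫ x in Ioi (0:ℝ),
      Complex.exp (((-2 * π * x * ξ : ℝ) : ℂ) * Complex.I) * myf a x
      = ((π / a : ℝ) : ℂ) * (1 / cp) := by
    rw [← my_integral_cexp_Ioi hcp_re, ← MeasureTheory.integral_const_mul]
    refine setIntegral_congr_fun measurableSet_Ioi fun x hx => ?_
    rw [Set.mem_Ioi] at hx
    unfold myf
    rw [abs_of_pos hx, mul_comm, mul_assoc, ← Complex.exp_add]
    congr 1
    push_cast
    rw [hcp_def]
    ring
  have hIic : ∫ x in Iic (0:ℝ),
      Complex.exp (((-2 * π * x * ξ : ℝ) : ℂ) * Complex.I) * myf a x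
      = ((π / a : ℝ) : ℂ) * (1 / cm) := by
    rw [show (0:ℝ) = -0 by norm_num, ← integral_comp_neg_Ioi]
    rw [← my_integral_cexp_Ioi hcm_re, ← MeasureTheory.integral_const_mul]
    refine setIntegral_congr_fun measurableSet_Ioi fun x hx => ?_
    rw [Set.mem_Ioi] at hx
    unfold myf
    rw [abs_neg, abs_of_pos hx, mul_comm, mul_assoc, ← Complex.exp_add]
    congr 1
    push_cast
    rw [hcm_def]
    ring
  rw [hIoi, hIic]
  have ha' : (a : ℂ) ≠ 0 := Complex.ofReal_ne_zero.2 ha.ne'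
  have hπ' : (π : ℂ) ≠ 0 := Complex.ofReal_ne_zero.2 hπ.ne'
  have hcp0 : cp ≠ 0 := fun h => by simp [h] at hcp_re
  have hcm0 : cm ≠ 0 := fun h => by simp [h] at hcm_re
  have hden : (a : ℂ) ^ 2 + (ξ : ℂ) ^ 2 ≠ 0 := by
    have : ((a^2 + ξ^2 : ℝ) : ℂ) ≠ 0 := Complex.ofReal_ne_zero.2 (by positivity)
    push_cast at this
    exact this
  rw [hcp_def, hcm_def]
  push_cast
  field_simp
  ring_nf
  have hp : (a:ℂ) + ξ * Complex.I ≠ 0 := fun h => hcp0 (by rw [hcp_def, h, mul_zero])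
  have hm : (a:ℂ) - ξ * Complex.I ≠ 0 := fun h => hcm0 (by rw [hcm_def, h, mul_zero])
  field_simp
  ring_nf
  rw [Complex.I_sq]
  ring

lemma myf_isBigO {a : ℝ} (ha : 0 < a) :
    myf a =O[cocompact ℝ] fun x : ℝ => |x| ^ (-2 : ℝ) := by
  have h2a : 0 < 2 * π * a := by positivity
  have h1 : Tendsto (fun y : ℝ => y ^ (2:ℝ) * Real.exp (-(2 * π * a) * y)) atTop (𝓝 0) :=
    tendsto_rpow_mul_exp_neg_mul_atTop_nhds_zero 2 _ h2a
  have h2 : Tendsto (fun x : ℝ => |x| ^ (2:ℝ) * Real.exp (-(2 * π * a) * |x|))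
      (cocompact ℝ) (𝓝 0) := h1.comp tendsto_norm_cocompact_atTop
  have h4 := (h2.isBigO_one ℝ).mul
    (isBigO_refl (fun x : ℝ => |x| ^ (-2 : ℝ)) (cocompact ℝ))
  have h5 : (fun x : ℝ => Real.exp (-(2 * π * a) * |x|))
      =O[cocompact ℝ] fun x : ℝ => |x| ^ (-2 : ℝ) := by
    refine (h4.congr' ?_ (Eventually.of_forall fun x => one_mul _))
    filter_upwards [tendsto_norm_cocompact_atTop.eventually_ge_atTop 1] with x hx
    have hx0 : (0:ℝ) < |x| := lt_of_lt_of_le one_pos hx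
    have hpow : |x| ^ (2:ℝ) * |x| ^ (-2:ℝ) = 1 := by
      rw [← Real.rpow_add hx0]; norm_num
    rw [mul_right_comm, hpow, one_mul]
  have h6 : myf a =O[cocompact ℝ] fun x : ℝ => Real.exp (-(2 * π * a) * |x|) := by
    apply IsBigO.of_bound |π / a|
    filter_upwards with x
    rw [myf_norm, Real.norm_eq_abs, abs_of_pos (Real.exp_pos _)]
    apply le_of_eq
    congr 2
    ring
  exact h6.trans h5

lemma fourier_myf_isBigO {a : ℝ} (ha : 0 < a) :
    (𝓕 (myf a)) =O[cocompact ℝ] fun x : ℝ => |x| ^ (-2 : ℝ) := by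
  apply IsBigO.of_bound 1
  filter_upwards [tendsto_norm_cocompact_atTop.eventually_ge_atTop 1] with ξ hξ
  rw [Real.norm_eq_abs] at hξ
  have hx0 : (0:ℝ) < |ξ| := lt_of_lt_of_le one_pos hξ
  rw [fourier_myf ha]
  have h1 : ((a : ℂ) ^ 2 + (ξ : ℂ) ^ 2) = ((a ^ 2 + ξ ^ 2 : ℝ) : ℂ) := by push_cast; ring
  rw [h1, norm_div, norm_one, Complex.norm_real, Real.norm_eq_abs,
    abs_of_pos (by positivity : (0:ℝ) < a ^ 2 + ξ ^ 2), Real.norm_eq_abs,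
    abs_of_pos (Real.rpow_pos_of_pos hx0 _), one_mul]
  have h2 : |ξ| ^ (-2:ℝ) = (ξ ^ 2)⁻¹ := by
    rw [show (-2:ℝ) = ((-2 : ℤ) : ℝ) by norm_num, Real.rpow_intCast]
    simp [zpow_ofNat, sq_abs]
  rw [h2, one_div]
  have hξ2 : (0:ℝ) < ξ ^ 2 := by
    have := _root_.sq_abs ξ ▸ (by positivity : (0:ℝ) < |ξ| ^ 2)
    exact this
  apply inv_anti₀ hξ2
  nlinarith [sq_nonneg a]

/-- Poisson summation identity:
`∑_{k ∈ ℤ} e^{i k θ} / (k² + a²) = (π / a) ∑_{k ∈ ℤ} e^{-a |2πk + θ|}` for `a > 0`. -/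
theorem stmt_1 (a θ : ℝ) (ha : 0 < a) :
    ∑' k : ℤ, Complex.exp (Complex.I * (k : ℂ) * (θ : ℂ)) / ((k : ℂ) ^ 2 + (a : ℂ) ^ 2)
      = (((Real.pi / a) * ∑' k : ℤ, Real.exp (-a * |2 * Real.pi * (k : ℝ) + θ|) : ℝ) : ℂ) := by
  have hπ : (0:ℝ) < π := Real.pi_pos
  have key := Real.tsum_eq_tsum_fourier_of_rpow_decay myf_cont one_lt_two
      (myf_isBigO ha) (fourier_myf_isBigO ha) (θ / (2 * π))
  have hR : ∑' n : ℤ, 𝓕 (myf a) n * fourier n (↑(θ / (2 * π)) : UnitAddCircle)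
      = ∑' k : ℤ, Complex.exp (Complex.I * (k : ℂ) * (θ : ℂ)) / ((k : ℂ) ^ 2 + (a : ℂ) ^ 2) := by
    refine tsum_congr fun n => ?_
    rw [fourier_myf ha, fourier_coe_apply, one_div_mul_eq_div]
    have h2π : ((2 * π : ℝ) : ℂ) ≠ 0 := Complex.ofReal_ne_zero.2 (by positivity)
    have hexp : Complex.exp (2 * (π : ℂ) * Complex.I * (n : ℂ) * ((θ / (2 * π) : ℝ) : ℂ) / ((1 : ℝ) : ℂ))
        = Complex.exp (Complex.I * (n : ℂ) * (θ : ℂ)) := by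
      congr 1
      push_cast at h2π ⊢
      field_simp
    rw [hexp]
    congr 1
    push_cast
    ring
  have habs : ∀ n : ℤ, -(2 * π * a * |θ / (2 * π) + n|) = -a * |2 * π * n + θ| := by
    intro n
    have h2π : (0:ℝ) < 2 * π := by positivity
    have h1 : 2 * π * |θ / (2 * π) + n| = |2 * π * (θ / (2 * π) + n)| := by
      rw [abs_mul, abs_of_pos h2π]
    have h2 : 2 * π * (θ / (2 * π) + n) = 2 * π * n + θ := by
      field_simp
      ring
    calc -(2 * π * a * |θ / (2 * π) + n|) = -a * (2 * π * |θ / (2 * π) + n|) := by ring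
    _ = -a * |2 * π * n + θ| := by rw [h1, h2]
  have hL : ∑' n : ℤ, myf a (θ / (2 * π) + n)
      = (((π / a) * ∑' k : ℤ, Real.exp (-a * |2 * π * (k : ℝ) + θ|) : ℝ) : ℂ) := by
    rw [Complex.ofReal_mul, Complex.ofReal_tsum, ← tsum_mul_left]
    refine tsum_congr fun n => ?_
    unfold myf
    rw [habs n, ← Complex.ofReal_exp]
  rw [← hR, ← key, hL]
end

section
/- There is a universal constant $C$ such that for all $a \ge 1$ and all $\theta \in [-\pi,\pi]$: $0 \le \sum_{k\in\mathbb{Z}} \frac{e^{i k \theta}}{k^2 + a^2} \le \frac{C}{a} e^{-a|\theta|}$. -/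
open Real intervalIntegral

noncomputable section

namespace Stmt2Aux

lemma integral_cosh_exp (a : ℝ) (ha : 0 < a) (k : ℤ) :
    ∫ x in (-π)..π, Complex.exp (-(Complex.I * k * x)) * (Real.cosh (a * (π - |x|)) : ℂ)
      = 2 * a * Real.sinh (a * π) / ((k:ℂ)^2 + (a:ℂ)^2) := by
  have hc1 : (-(a:ℂ) - Complex.I * k) ≠ 0 := by
    intro h
    have := congrArg Complex.re h
    simp [Complex.add_re, Complex.mul_re] at this
    linarith
  have hc2 : ((a:ℂ) - Complex.I * k) ≠ 0 := by
    intro h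
    have := congrArg Complex.re h
    simp [Complex.add_re, Complex.mul_re] at this
    linarith
  have hcont : ∀ c : ℂ, Continuous fun x : ℝ => Complex.exp (c * x) := by
    intro c; fun_prop
  have hint : ∀ (c : ℂ) (u v : ℝ), IntervalIntegrable (fun x : ℝ => Complex.exp (c * x))
      MeasureTheory.volume u v := fun c u v => ((hcont c).intervalIntegrable u v)
  -- integrand continuous
  have hcont0 : Continuous fun x : ℝ =>
      Complex.exp (-(Complex.I * k * x)) * (Real.cosh (a * (π - |x|)) : ℂ) := by
    fun_prop
  have hsplit := intervalIntegral.integral_add_adjacent_intervals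
    (a := -π) (b := 0) (c := π) (μ := MeasureTheory.volume)
    (hcont0.intervalIntegrable _ _) (hcont0.intervalIntegrable _ _)
  rw [← hsplit]
  have hI2 : (∫ x in (0:ℝ)..π, Complex.exp (-(Complex.I * k * x)) * (Real.cosh (a * (π - |x|)) : ℂ))
      = ∫ x in (0:ℝ)..π, (Complex.exp ((a:ℝ)*π) / 2 * Complex.exp ((-(a:ℂ) - Complex.I*k) * x)
        + Complex.exp (-((a:ℝ)*π)) / 2 * Complex.exp (((a:ℂ) - Complex.I*k) * x)) := by
    apply intervalIntegral.integral_congr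
    intro x hx
    dsimp only
    rw [Set.uIcc_of_le (by positivity)] at hx
    rw [abs_of_nonneg hx.1, Real.cosh_eq]
    push_cast
    rw [show ((-(a:ℂ) - Complex.I*↑k) * ↑x) = (↑a * (↑π - ↑x) : ℂ) + (-(Complex.I * ↑k * ↑x) + -(↑a * ↑π)) by ring,
        show (((a:ℂ) - Complex.I*↑k) * ↑x) = (-(↑a * (↑π - ↑x)) : ℂ) + (-(Complex.I * ↑k * ↑x) + ↑a * ↑π) by ring,
        Complex.exp_add, Complex.exp_add, Complex.exp_add, Complex.exp_add]
    have hAne : Complex.exp ((a:ℂ) * ↑π) ≠ 0 := Complex.exp_ne_zero _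
    have hE : Complex.exp ((a:ℂ)*↑π) * Complex.exp (-((a:ℂ)*↑π)) = 1 := by
      rw [← Complex.exp_add]; simp
    linear_combination (-(Complex.exp (-(Complex.I*(k:ℂ)*(x:ℂ))) *
      (Complex.exp ((a:ℂ)*((π:ℂ) - (x:ℂ))) + Complex.exp (-((a:ℂ)*((π:ℂ) - (x:ℂ))))) / 2)) * hE
  have hI1 : (∫ x in (-π)..(0:ℝ), Complex.exp (-(Complex.I * k * x)) * (Real.cosh (a * (π - |x|)) : ℂ))
      = ∫ x in (-π)..(0:ℝ), (Complex.exp ((a:ℝ)*π) / 2 * Complex.exp (((a:ℂ) - Complex.I*k) * x)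
        + Complex.exp (-((a:ℝ)*π)) / 2 * Complex.exp ((-(a:ℂ) - Complex.I*k) * x)) := by
    apply intervalIntegral.integral_congr
    intro x hx
    dsimp only
    rw [Set.uIcc_of_le (by linarith [pi_pos] : -π ≤ (0:ℝ))] at hx
    rw [abs_of_nonpos hx.2, Real.cosh_eq]
    push_cast
    rw [show (((a:ℂ) - Complex.I*↑k) * ↑x) = (↑a * (↑π - -↑x) : ℂ) + (-(Complex.I * ↑k * ↑x) + -(↑a * ↑π)) by ring,
        show ((-(a:ℂ) - Complex.I*↑k) * ↑x) = (-(↑a * (↑π - -↑x)) : ℂ) + (-(Complex.I * ↑k * ↑x) + ↑a * ↑π) by ring,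
        Complex.exp_add, Complex.exp_add, Complex.exp_add, Complex.exp_add]
    have hAne : Complex.exp ((a:ℂ) * ↑π) ≠ 0 := Complex.exp_ne_zero _
    have hE : Complex.exp ((a:ℂ)*↑π) * Complex.exp (-((a:ℂ)*↑π)) = 1 := by
      rw [← Complex.exp_add]; simp
    linear_combination (-(Complex.exp (-(Complex.I*(k:ℂ)*(x:ℂ))) *
      (Complex.exp ((a:ℂ)*((π:ℂ) - -(x:ℂ))) + Complex.exp (-((a:ℂ)*((π:ℂ) - -(x:ℂ))))) / 2)) * hE
  rw [hI1, hI2]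
  have hii : ∀ (c d : ℂ) (u v : ℝ), IntervalIntegrable (fun x : ℝ => c * Complex.exp (d * x)) MeasureTheory.volume u v := fun c d u v => (continuous_const.mul (hcont d)).intervalIntegrable u v
  rw [intervalIntegral.integral_add (hii _ _ _ _)
      (hii _ _ _ _),
    intervalIntegral.integral_add (hii _ _ _ _)
      (hii _ _ _ _),
    intervalIntegral.integral_const_mul, intervalIntegral.integral_const_mul,
    intervalIntegral.integral_const_mul, intervalIntegral.integral_const_mul,
    integral_exp_mul_complex hc2, integral_exp_mul_complex hc1,
    integral_exp_mul_complex hc1, integral_exp_mul_complex hc2]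
  -- now pure algebra with exponentials
  have hu : Complex.exp (Complex.I * k * π) * Complex.exp (-(Complex.I * k * π)) = 1 := by
    rw [← Complex.exp_add]; simp
  have hu2 : Complex.exp (Complex.I * k * π) = Complex.exp (-(Complex.I * k * π)) := by
    have h := Complex.exp_int_mul_two_pi_mul_I k
    calc Complex.exp (Complex.I * k * π)
        = Complex.exp (-(Complex.I * k * π)) * Complex.exp ((k : ℂ) * (2 * π * Complex.I)) := by
          rw [← Complex.exp_add]; congr 1; push_cast; ring
      _ = Complex.exp (-(Complex.I * k * π)) := by rw [h, mul_one]
  set u := Complex.exp (-(Complex.I * k * π)) with hudef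
  have hA : Complex.exp (-((a:ℝ)*π) : ℂ) * Complex.exp (((a:ℝ)*π) : ℂ) = 1 := by
    rw [← Complex.exp_add]; simp
  set A := Complex.exp (((a:ℝ)*π) : ℂ) with hAdef
  set B := Complex.exp (-((a:ℝ)*π) : ℂ) with hBdef
  have e1 : Complex.exp (((a:ℂ) - Complex.I*k) * π) = A * u := by
    rw [hAdef, hudef, ← Complex.exp_add]; congr 1; push_cast; ring
  have e2 : Complex.exp (((a:ℂ) - Complex.I*k) * ((-π : ℝ) : ℂ)) = B * Complex.exp (Complex.I * k * π) := by
    rw [hBdef, ← Complex.exp_add]; congr 1; push_cast; ring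
  have e3 : Complex.exp ((-(a:ℂ) - Complex.I*k) * π) = B * u := by
    rw [hBdef, hudef, ← Complex.exp_add]; congr 1; push_cast; ring
  have e4 : Complex.exp ((-(a:ℂ) - Complex.I*k) * ((-π : ℝ) : ℂ)) = A * Complex.exp (Complex.I * k * π) := by
    rw [hAdef, ← Complex.exp_add]; congr 1; push_cast; ring
  rw [e1, e2, e3, e4, ← hu2]
  have hzero : Complex.exp (((a:ℂ) - Complex.I*k) * ((0:ℝ):ℂ)) = 1 := by norm_num
  have hzero' : Complex.exp ((-(a:ℂ) - Complex.I*k) * ((0:ℝ):ℂ)) = 1 := by norm_num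
  rw [hzero, hzero']
  have hsinh : (Real.sinh (a*π) : ℂ) = (A - B)/2 := by
    rw [Complex.ofReal_sinh, Complex.sinh, hAdef, hBdef]; push_cast; ring_nf
  rw [hsinh]
  have hk2 : ((k:ℂ)^2 + (a:ℂ)^2) = -((-(a:ℂ) - Complex.I*k) * ((a:ℂ) - Complex.I*k)) := by
    have : Complex.I^2 = -1 := Complex.I_sq
    ring_nf
    rw [this]; ring
  rw [hk2]
  set v := Complex.exp (Complex.I * k * π)
  have hAne : A ≠ 0 := Complex.exp_ne_zero _
  have hBne : B ≠ 0 := Complex.exp_ne_zero _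
  field_simp
  ring_nf

lemma ksq_ne (a : ℝ) (ha : 0 < a) (k : ℤ) : ((k:ℂ)^2 + (a:ℂ)^2) ≠ 0 := by
  have h : ((k:ℂ)^2 + (a:ℂ)^2) = (((k:ℝ)^2 + a^2 : ℝ) : ℂ) := by push_cast; ring
  rw [h, Complex.ofReal_ne_zero]
  positivity

lemma summable_inv_sq_add (a : ℝ) (ha : 0 < a) :
    Summable (fun k : ℤ => 1 / ((k:ℝ)^2 + a^2)) := by
  have h : Summable (fun k : ℤ => 1 / ((k:ℝ))^2) :=
    (Real.summable_one_div_int_pow (p := 2)).mpr one_lt_two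
  apply Summable.of_norm_bounded_eventually h
  have : {k : ℤ | ¬ ‖1 / ((k:ℝ)^2 + a^2)‖ ≤ 1 / ((k:ℝ))^2} ⊆ {0} := by
    intro k hk
    simp only [Set.mem_setOf_eq, not_le] at hk
    by_contra hk0
    have hkne : (k:ℝ) ≠ 0 := Int.cast_ne_zero.mpr (by simpa using hk0)
    have h1 : (0:ℝ) < (k:ℝ)^2 := by positivity
    have h2 : (0:ℝ) < (k:ℝ)^2 + a^2 := by positivity
    have : ‖1 / ((k:ℝ)^2 + a^2)‖ = 1 / ((k:ℝ)^2 + a^2) := by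
      rw [Real.norm_eq_abs, abs_of_pos (by positivity)]
    rw [this] at hk
    have : 1 / ((k:ℝ)^2 + a^2) ≤ 1 / (k:ℝ)^2 := by
      apply one_div_le_one_div_of_le h1; nlinarith
    linarith
  exact Set.Finite.subset (Set.finite_singleton 0) this

lemma key (a θ : ℝ) (ha : 1 ≤ a) (hθ : θ ∈ Set.Icc (-π) π) :
    HasSum (fun k : ℤ => Complex.exp (Complex.I * (k:ℂ) * (θ:ℂ)) / ((k:ℂ)^2 + (a:ℂ)^2))
      ((π / (a * Real.sinh (a*π)) * Real.cosh (a*(π - |θ|)) : ℝ) : ℂ) := by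
  have ha0 : 0 < a := lt_of_lt_of_le one_pos ha
  haveI : Fact (0 < 2*π) := ⟨by positivity⟩
  set g : ℝ → ℂ := fun x => (Real.cosh (a*(π - |x|)) : ℂ) with hg
  have hcg : Continuous g := by fun_prop
  have hend : g (-π) = g (-π + 2*π) := by
    simp only [hg]
    rw [show -π + 2*π = π by ring, abs_neg]
  set F : C(AddCircle (2*π), ℂ) := ⟨AddCircle.liftIco (2*π) (-π) g,
    AddCircle.liftIco_continuous hend hcg.continuousOn⟩ with hF
  have hFx : ∀ x : ℝ, x ∈ Set.Icc (-π) (-π + 2*π) → F (x : AddCircle (2*π)) = g x := by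
    intro x hx
    rcases eq_or_lt_of_le hx.2 with h | h
    · have : ((x : ℝ) : AddCircle (2*π)) = ((-π : ℝ) : AddCircle (2*π)) := by
        rw [h]
        exact AddCircle.coe_add_period (2*π) (-π)
      show AddCircle.liftIco (2*π) (-π) g _ = _
      rw [this, AddCircle.liftIco_coe_apply ⟨le_refl _, by linarith [pi_pos]⟩, hend, ← h]
    · show AddCircle.liftIco (2*π) (-π) g _ = _
      exact AddCircle.liftIco_coe_apply ⟨hx.1, h⟩
  have hfourier : ∀ (m : ℤ) (x : ℝ),
      fourier m ((x : ℝ) : AddCircle (2*π)) = Complex.exp (Complex.I * m * x) := by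
    intro m x
    rw [fourier_coe_apply]
    congr 1
    push_cast
    have : (π:ℂ) ≠ 0 := Complex.ofReal_ne_zero.mpr pi_ne_zero
    field_simp
  have coeff : ∀ k : ℤ, fourierCoeff (F : AddCircle (2*π) → ℂ) k
      = ((a * Real.sinh (a*π) / π : ℝ) : ℂ) / ((k:ℂ)^2 + (a:ℂ)^2) := by
    intro k
    rw [fourierCoeff_eq_intervalIntegral (F : AddCircle (2*π) → ℂ) k (-π)]
    have hcongr : (∫ x in (-π)..(-π + 2*π),
          fourier (-k) ((x : ℝ) : AddCircle (2*π)) • F (x : AddCircle (2*π)))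
        = ∫ x in (-π)..(-π + 2*π), Complex.exp (-(Complex.I * k * x)) * g x := by
      apply intervalIntegral.integral_congr
      intro x hx
      rw [Set.uIcc_of_le (by linarith [pi_pos])] at hx
      dsimp only
      rw [smul_eq_mul, hFx x hx, hfourier (-k) x]
      congr 2
      push_cast
      ring
    rw [hcongr, show -π + 2*π = π by ring, integral_cosh_exp a ha0 k]
    have h2π : ((2*π : ℝ) : ℂ) ≠ 0 := Complex.ofReal_ne_zero.mpr (by positivity)
    rw [Complex.real_smul]
    have hkne := ksq_ne a ha0 k
    push_cast
    have hπ : (π:ℂ) ≠ 0 := Complex.ofReal_ne_zero.mpr pi_ne_zero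
    field_simp
  have hsum : Summable (fourierCoeff (F : AddCircle (2*π) → ℂ)) := by
    have h1 : Summable (fun k : ℤ =>
        ((a * Real.sinh (a*π) / π * (1 / ((k:ℝ)^2 + a^2)) : ℝ) : ℂ)) :=
      Complex.summable_ofReal.mpr ((summable_inv_sq_add a ha0).mul_left _)
    apply h1.congr
    intro k
    rw [coeff k]
    have hkne := ksq_ne a ha0 k
    push_cast
    field_simp
  have HS := has_pointwise_sum_fourier_series_of_summable hsum ((θ : ℝ) : AddCircle (2*π))
  rw [hFx θ ⟨hθ.1, by linarith [hθ.2]⟩] at HS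
  have HS2 : HasSum (fun k : ℤ =>
      ((a * Real.sinh (a*π) / π : ℝ) : ℂ) *
        (Complex.exp (Complex.I * (k:ℂ) * (θ:ℂ)) / ((k:ℂ)^2 + (a:ℂ)^2))) (g θ) := by
    apply HS.congr_fun
    intro k
    rw [coeff k, hfourier k θ, smul_eq_mul]
    ring
  have hcne : ((a * Real.sinh (a*π) / π : ℝ) : ℂ) ≠ 0 := by
    rw [Complex.ofReal_ne_zero]
    have hs : 0 < Real.sinh (a*π) := Real.sinh_pos_iff.mpr (by positivity)
    positivity
  have HS3 := HS2.mul_left (((a * Real.sinh (a*π) / π : ℝ) : ℂ))⁻¹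
  rw [inv_mul_eq_div] at HS3
  have HS4 : HasSum (fun k : ℤ =>
      Complex.exp (Complex.I * (k:ℂ) * (θ:ℂ)) / ((k:ℂ)^2 + (a:ℂ)^2))
      (g θ / (((a * Real.sinh (a*π) / π : ℝ) : ℂ))) := by
    apply HS3.congr_fun
    intro k
    rw [← mul_assoc, inv_mul_cancel₀ hcne, one_mul]
  convert HS4 using 1
  rw [hg]
  have hs : 0 < Real.sinh (a*π) := Real.sinh_pos_iff.mpr (by positivity)
  push_cast
  have hπ : (π:ℂ) ≠ 0 := Complex.ofReal_ne_zero.mpr pi_ne_zero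
  have hsne : ((Real.sinh (a*π) : ℝ) : ℂ) ≠ 0 := Complex.ofReal_ne_zero.mpr hs.ne'
  have hane : (a : ℂ) ≠ 0 := Complex.ofReal_ne_zero.mpr ha0.ne'
  field_simp

end Stmt2Aux

/-- There is a universal constant `C` such that for all `a ≥ 1` and `θ ∈ [-π, π]`,
the sum `∑_{k ∈ ℤ} e^{i k θ}/(k² + a²)` is a nonnegative real number bounded by
`(C / a) e^{-a |θ|}`. -/
theorem stmt_2 : ∃ C : ℝ, ∀ a θ : ℝ, 1 ≤ a → θ ∈ Set.Icc (-Real.pi) Real.pi →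
    ∃ r : ℝ,
      (∑' k : ℤ, Complex.exp (Complex.I * (k : ℂ) * (θ : ℂ)) / ((k : ℂ) ^ 2 + (a : ℂ) ^ 2))
        = (r : ℂ) ∧
      0 ≤ r ∧ r ≤ (C / a) * Real.exp (-a * |θ|) := by
  use 2*π/(1 - Real.exp (-(2*π)))
  intro a θ ha hθ
  have ha0 : 0 < a := lt_of_lt_of_le one_pos ha
  have hkey := Stmt2Aux.key a θ ha hθ
  have hs : 0 < Real.sinh (a*π) := Real.sinh_pos_iff.mpr (by positivity)
  have habs : |θ| ≤ π := abs_le.mpr ⟨hθ.1, hθ.2⟩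
  refine ⟨_, hkey.tsum_eq, ?_, ?_⟩
  · have hc : 0 < Real.cosh (a*(π - |θ|)) := Real.cosh_pos _
    have : 0 < π / (a * Real.sinh (a*π)) := by positivity
    positivity
  · set C := 2*π/(1 - Real.exp (-(2*π))) with hC
    set S := Real.sinh (a*π) with hSdef
    set t := a*(π - |θ|) with htdef
    have ht0 : 0 ≤ t := by
      have : 0 ≤ π - |θ| := by linarith
      positivity
    have h3 : 0 < 1 - Real.exp (-(2*π)) := by
      have : Real.exp (-(2*π)) < 1 := Real.exp_lt_one_iff.mpr (by linarith [pi_pos])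
      linarith
    have hC0 : 0 < C := by rw [hC]; positivity
    have h1 : Real.cosh t ≤ Real.exp t := by
      rw [Real.cosh_eq]
      have := Real.exp_le_exp.mpr (neg_le_self ht0)
      linarith
    have h2 : (1 - Real.exp (-(2*π))) * Real.exp (a*π) ≤ 2 * S := by
      rw [hSdef, Real.sinh_eq]
      have hle : Real.exp (-(a*π)) ≤ Real.exp (a*π) * Real.exp (-(2*π)) := by
        rw [← Real.exp_add]
        apply Real.exp_le_exp.mpr
        nlinarith [pi_pos]
      nlinarith [hle]
    have het : Real.exp t = Real.exp (a*π) * Real.exp (-a*|θ|) := by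
      rw [← Real.exp_add]
      congr 1
      rw [htdef]; ring
    have h4 : C * ((1 - Real.exp (-(2*π))) * Real.exp (a*π) / 2) = π * Real.exp (a*π) := by
      rw [hC]; field_simp
    have h5 : π * Real.exp (a*π) ≤ C * S := by
      rw [← h4]
      have : (1 - Real.exp (-(2*π))) * Real.exp (a*π) / 2 ≤ S := by linarith
      exact mul_le_mul_of_nonneg_left this hC0.le
    have hE : 0 < Real.exp (-a*|θ|) := Real.exp_pos _
    calc π / (a * S) * Real.cosh t = (π * Real.cosh t) / (a * S) := by ring
      _ ≤ (π * Real.exp t) / (a * S) := by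
          apply (div_le_div_iff_of_pos_right (by positivity)).mpr
          exact mul_le_mul_of_nonneg_left h1 pi_pos.le
      _ = (π * Real.exp (a*π) * Real.exp (-a*|θ|)) / (a * S) := by rw [het]; ring
      _ ≤ (C * S * Real.exp (-a*|θ|)) / (a * S) := by
          apply (div_le_div_iff_of_pos_right (by positivity)).mpr
          exact mul_le_mul_of_nonneg_right h5 hE.le
      _ = (C / a) * Real.exp (-a*|θ|) := by field_simp
end
end

section
/- Fix a positive integer $n$. Let $\mathcal{C}$ be the free commutative $\mathbb{C}$-algebra on symbols $a_i^{\pm}, b_i^{\pm}$ ($1\le i\le n$) and $S_{ij}^{\pm}$ ($1\le i<j\le n$). Define $\delta_i^A := a_i^+ - a_i^-$, $\delta_i^B := b_i^+ - b_i^-$, $\Delta_{ij} := S_{ij}^+ - S_{ij}^-$, $U_i := a_i^+ b_i^-$, $W_{1,i} := a_i^- b_i^-$, $W_{2,i} := a_i^- b_i^+$, $W_{3,i} := a_i^+ b_i^+$. For $c,d \in \{1,2,3\}$ set $S_{ij}^{cd} := S_{ij}^+$ if $c = 1$ or $d = 3$, and $S_{ij}^{cd} := S_{ij}^-$ otherwise;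 set $\sigma_1 = 1$, $\sigma_2 = -1$, $\sigma_3 = 1$. Define $D := \sum_{c_1,\ldots,c_n \in \{1,2,3\}} \left(\prod_{i=1}^n \sigma_{c_i}\right)\left[\prod_{i=1}^n U_i - \prod_{i=1}^n W_{c_i,i}\right] \prod_{1\le i<j\le n} S_{ij}^{c_i c_j}$. Then $D$ belongs to the ideal $\mathcal{I}$ of $\mathcal{C}$ generated by all elements $\delta_{i_0}^A \Delta_{i_0 i_1} \Delta_{i_1 i_2} \cdots \Delta_{i_{l-1} i_l} \delta_{i_l}^B$ with $1 \le i_0 < i_1 < \cdots < i_l \le n$ and $l \ge 0$ (for $l = 0$ the generator is $\delta_i^A \delta_i^B$). -/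
open MvPolynomial Finset

/-- Variable index type for the algebra `𝒞`: variables `aᵢ^±`, `bᵢ^±` (1 ≤ i ≤ n)
and `S_{ij}^±`. The `Bool` flag encodes the sign: `true = +`, `false = -`. -/
abbrev LVar (n : ℕ) := (Fin n × Bool) ⊕ (Fin n × Bool) ⊕ ((Fin n × Fin n) × Bool)

/-- `aᵢ^s`. -/
noncomputable def aP (n : ℕ) (i : Fin n) (s : Bool) : MvPolynomial (LVar n) ℂ :=
  X (Sum.inl (i, s))

/-- `bᵢ^s`. -/
noncomputable def bP (n : ℕ) (i : Fin n) (s : Bool) : MvPolynomial (LVar n) ℂ :=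
  X (Sum.inr (Sum.inl (i, s)))

/-- `S_{ij}^s`. -/
noncomputable def SP (n : ℕ) (i j : Fin n) (s : Bool) : MvPolynomial (LVar n) ℂ :=
  X (Sum.inr (Sum.inr ((i, j), s)))

/-- `δᵢ^A = aᵢ⁺ - aᵢ⁻`. -/
noncomputable def deltaA (n : ℕ) (i : Fin n) : MvPolynomial (LVar n) ℂ :=
  aP n i true - aP n i false

/-- `δᵢ^B = bᵢ⁺ - bᵢ⁻`. -/
noncomputable def deltaB (n : ℕ) (i : Fin n) : MvPolynomial (LVar n) ℂ :=
  bP n i true - bP n i false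

/-- `Δ_{ij} = S_{ij}⁺ - S_{ij}⁻`. -/
noncomputable def DeltaS (n : ℕ) (i j : Fin n) : MvPolynomial (LVar n) ℂ :=
  SP n i j true - SP n i j false

/-- `Uᵢ = aᵢ⁺ bᵢ⁻`. -/
noncomputable def UP (n : ℕ) (i : Fin n) : MvPolynomial (LVar n) ℂ :=
  aP n i true * bP n i false

/-- `W_{c,i}` for `c ∈ {1,2,3}` encoded as `Fin 3 = {0,1,2}`:
`W₁ = a⁻b⁻`, `W₂ = a⁻b⁺`, `W₃ = a⁺b⁺`. -/
noncomputable def WP (n : ℕ) (c : Fin 3) (i : Fin n) : MvPolynomial (LVar n) ℂ :=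
  if c = 0 then aP n i false * bP n i false
  else if c = 1 then aP n i false * bP n i true
  else aP n i true * bP n i true

/-- Sign `σ_c`: `σ₁ = 1`, `σ₂ = -1`, `σ₃ = 1` (encoded as `Fin 3 = {0,1,2}`). -/
def sigma3 (c : Fin 3) : ℂ := if c = 1 then -1 else 1

/-- `S_{ij}^{cd}`: `S⁺` when `c = 1` or `d = 3` (encoded `c = 0` or `d = 2`),
otherwise `S⁻`. -/
noncomputable def Scd (n : ℕ) (c d : Fin 3) (i j : Fin n) : MvPolynomial (LVar n) ℂ :=
  if c = 0 ∨ d = 2 then SP n i j true else SP n i j false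

/-- The element
`D = ∑_{c : {1,…,n} → {1,2,3}} (∏ᵢ σ_{cᵢ}) [∏ᵢ Uᵢ - ∏ᵢ W_{cᵢ,i}] ∏_{i<j} S_{ij}^{cᵢcⱼ}`. -/
noncomputable def Dpoly (n : ℕ) : MvPolynomial (LVar n) ℂ :=
  ∑ c : Fin n → Fin 3,
    C (∏ i, sigma3 (c i)) *
      ((∏ i, UP n i) - ∏ i, WP n (c i) i) *
      ∏ p ∈ Finset.univ.filter (fun p : Fin n × Fin n => p.1 < p.2),
        Scd n (c p.1) (c p.2) p.1 p.2

/-- The ideal generated by the chain products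
`δ_{i₀}^A Δ_{i₀i₁} Δ_{i₁i₂} ⋯ Δ_{i_{l-1}i_l} δ_{i_l}^B` with
`i₀ < i₁ < ⋯ < i_l` and `l ≥ 0` (for `l = 0` the generator is `δᵢ^A δᵢ^B`). -/
noncomputable def chainIdeal (n : ℕ) : Ideal (MvPolynomial (LVar n) ℂ) :=
  Ideal.span {P | ∃ (l : ℕ) (idx : Fin (l + 1) → Fin n), StrictMono idx ∧
    P = deltaA n (idx 0) *
        (∏ k : Fin l, DeltaS n (idx k.castSucc) (idx k.succ)) *
        deltaB n (idx (Fin.last l))}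

noncomputable def uC : Fin 3 → ℂ := fun k => if k = 0 then 0 else 1
noncomputable def vC : Fin 3 → ℂ := fun k => if k = 2 then 0 else 1

lemma Scd_eq (n : ℕ) (c d : Fin 3) (i j : Fin n) :
    Scd n c d i j = -(C (uC c * vC d) * DeltaS n i j) + SP n i j true := by
  fin_cases c <;> fin_cases d <;>
    simp [Scd, uC, vC, DeltaS] <;> ring

noncomputable def wC (n : ℕ) (E : Finset (Fin n × Fin n)) (i : Fin n) (k : Fin 3) : ℂ :=
  sigma3 k * (if i ∈ E.image Prod.fst then uC k else 1) *
    (if i ∈ E.image Prod.snd then vC k else 1)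

lemma prod_zero_one {α : Type*} {s : Finset α} {f : α → ℂ}
    (h : ∀ x ∈ s, f x = 0 ∨ f x = 1) :
    ∏ x ∈ s, f x = if ∀ x ∈ s, f x = 1 then 1 else 0 := by
  split_ifs with hall
  · exact Finset.prod_eq_one hall
  · push_neg at hall
    obtain ⟨x, hx, hfx⟩ := hall
    exact Finset.prod_eq_zero hx ((h x hx).resolve_right hfx)

lemma uC_zero_one (k : Fin 3) : uC k = 0 ∨ uC k = 1 := by unfold uC; split <;> simp
lemma vC_zero_one (k : Fin 3) : vC k = 0 ∨ vC k = 1 := by unfold vC; split <;> simp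

lemma prod_u_image (n : ℕ) (E : Finset (Fin n × Fin n)) (c : Fin n → Fin 3) :
    ∏ p ∈ E, uC (c p.1) = ∏ i ∈ E.image Prod.fst, uC (c i) := by
  rw [prod_zero_one (fun p _ => uC_zero_one (c p.1)),
      prod_zero_one (fun i _ => uC_zero_one (c i))]
  congr 1
  simp only [eq_iff_iff, Finset.mem_image]
  constructor
  · rintro h i ⟨p, hp, rfl⟩; exact h p hp
  · intro h p hp; exact h p.1 ⟨p, hp, rfl⟩

lemma prod_v_image (n : ℕ) (E : Finset (Fin n × Fin n)) (c : Fin n → Fin 3) :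
    ∏ p ∈ E, vC (c p.2) = ∏ i ∈ E.image Prod.snd, vC (c i) := by
  rw [prod_zero_one (fun p _ => vC_zero_one (c p.2)),
      prod_zero_one (fun i _ => vC_zero_one (c i))]
  congr 1
  simp only [eq_iff_iff, Finset.mem_image]
  constructor
  · rintro h i ⟨p, hp, rfl⟩; exact h p hp
  · intro h p hp; exact h p.2 ⟨p, hp, rfl⟩

lemma key (n : ℕ) (E : Finset (Fin n × Fin n)) (c : Fin n → Fin 3) :
    (∏ i, sigma3 (c i)) * ∏ p ∈ E, (uC (c p.1) * vC (c p.2)) = ∏ i, wC n E i (c i) := by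
  unfold wC
  rw [Finset.prod_mul_distrib, Finset.prod_mul_distrib, Finset.prod_mul_distrib,
      Finset.prod_ite_mem, Finset.prod_ite_mem, Finset.univ_inter, Finset.univ_inter,
      prod_u_image, prod_v_image]
  ring

noncomputable def SW (n : ℕ) (E : Finset (Fin n × Fin n)) (i : Fin n) :
    MvPolynomial (LVar n) ℂ :=
  ∑ k : Fin 3, C (wC n E i k) * WP n k i

noncomputable def GE (n : ℕ) (E : Finset (Fin n × Fin n)) : MvPolynomial (LVar n) ℂ :=
  ∑ c : Fin n → Fin 3,
    C (∏ i, sigma3 (c i)) * ((∏ i, UP n i) - ∏ i, WP n (c i) i) *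
      ((∏ p ∈ E, -(C (uC (c p.1) * vC (c p.2)) * DeltaS n p.1 p.2)) *
        ∏ p ∈ (Finset.univ.filter (fun p : Fin n × Fin n => p.1 < p.2)) \ E, SP n p.1 p.2 true)

lemma Dsum (n : ℕ) :
    Dpoly n = ∑ E ∈ (Finset.univ.filter (fun p : Fin n × Fin n => p.1 < p.2)).powerset,
      GE n E := by
  unfold Dpoly GE
  rw [Finset.sum_comm]
  refine Finset.sum_congr rfl fun c _ => ?_
  have h1 : ∏ p ∈ Finset.univ.filter (fun p : Fin n × Fin n => p.1 < p.2),
      Scd n (c p.1) (c p.2) p.1 p.2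
      = ∑ E ∈ (Finset.univ.filter (fun p : Fin n × Fin n => p.1 < p.2)).powerset,
        ((∏ p ∈ E, -(C (uC (c p.1) * vC (c p.2)) * DeltaS n p.1 p.2)) *
          ∏ p ∈ (Finset.univ.filter (fun p : Fin n × Fin n => p.1 < p.2)) \ E,
            SP n p.1 p.2 true) := by
    rw [Finset.prod_congr rfl fun p _ => Scd_eq n (c p.1) (c p.2) p.1 p.2,
      Finset.prod_add]
  rw [h1, Finset.mul_sum]

lemma GE_eq (n : ℕ) (E : Finset (Fin n × Fin n)) :
    GE n E = ((∏ i, UP n i) * C (∏ i, ∑ k, wC n E i k) - ∏ i, SW n E i) *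
      ((∏ p ∈ E, -DeltaS n p.1 p.2) *
        ∏ p ∈ (Finset.univ.filter (fun p : Fin n × Fin n => p.1 < p.2)) \ E,
          SP n p.1 p.2 true) := by
  unfold GE
  have step1 : ∀ c : Fin n → Fin 3,
      C (∏ i, sigma3 (c i)) * ((∏ i, UP n i) - ∏ i, WP n (c i) i) *
        ((∏ p ∈ E, -(C (uC (c p.1) * vC (c p.2)) * DeltaS n p.1 p.2)) *
          ∏ p ∈ (Finset.univ.filter (fun p : Fin n × Fin n => p.1 < p.2)) \ E,
            SP n p.1 p.2 true)
      = (C (∏ i, wC n E i (c i)) * ((∏ i, UP n i) - ∏ i, WP n (c i) i)) *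
        ((∏ p ∈ E, -DeltaS n p.1 p.2) *
          ∏ p ∈ (Finset.univ.filter (fun p : Fin n × Fin n => p.1 < p.2)) \ E,
            SP n p.1 p.2 true) := by
    intro c
    have h2 : ∏ p ∈ E, -(C (uC (c p.1) * vC (c p.2)) * DeltaS n p.1 p.2)
        = C (∏ p ∈ E, uC (c p.1) * vC (c p.2)) * ∏ p ∈ E, -DeltaS n p.1 p.2 := by
      rw [map_prod, ← Finset.prod_mul_distrib]
      exact Finset.prod_congr rfl fun p _ => by ring
    rw [h2, ← key n E c, map_mul, map_prod]
    ring
  rw [Finset.sum_congr rfl fun c _ => step1 c, ← Finset.sum_mul]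
  congr 1
  have hA : (∑ c : Fin n → Fin 3, C (∏ i, wC n E i (c i))
        : MvPolynomial (LVar n) ℂ) = C (∏ i, ∑ k, wC n E i k) := by
    rw [← map_sum]
    congr 1
    have := Finset.prod_univ_sum (fun _ : Fin n => (Finset.univ : Finset (Fin 3)))
      (fun i k => wC n E i k)
    rw [Fintype.piFinset_univ] at this
    exact this.symm
  have hB : (∑ c : Fin n → Fin 3, C (∏ i, wC n E i (c i)) * ∏ i, WP n (c i) i)
      = ∏ i, SW n E i := by
    unfold SW
    rw [Finset.prod_univ_sum (fun _ : Fin n => (Finset.univ : Finset (Fin 3)))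
      (fun i k => C (wC n E i k) * WP n k i)]
    rw [Fintype.piFinset_univ]
    refine Finset.sum_congr rfl fun c _ => ?_
    rw [Finset.prod_mul_distrib, map_prod]
  calc (∑ c : Fin n → Fin 3, C (∏ i, wC n E i (c i)) * ((∏ i, UP n i) - ∏ i, WP n (c i) i))
      = (∏ i, UP n i) * (∑ c : Fin n → Fin 3, C (∏ i, wC n E i (c i)))
        - ∑ c : Fin n → Fin 3, C (∏ i, wC n E i (c i)) * ∏ i, WP n (c i) i := by
        rw [Finset.mul_sum, ← Finset.sum_sub_distrib]
        exact Finset.sum_congr rfl fun c _ => by ring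
    _ = _ := by rw [hA, hB]

lemma prod_sub_prod_mem {R : Type*} [CommRing R] {I : Ideal R} {α : Type*} {s : Finset α}
    {f g : α → R} (h : ∀ i ∈ s, f i - g i ∈ I) :
    (∏ i ∈ s, f i) - ∏ i ∈ s, g i ∈ I := by
  classical
  induction s using Finset.cons_induction with
  | empty => simpa using I.zero_mem
  | cons a s ha ih =>
    rw [Finset.prod_cons, Finset.prod_cons]
    have h1 : f a - g a ∈ I := h a (Finset.mem_cons_self a s)
    have h2 : (∏ i ∈ s, f i) - ∏ i ∈ s, g i ∈ I := ih fun i hi => h i (Finset.mem_cons_of_mem hi)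
    have heq : f a * ∏ i ∈ s, f i - g a * ∏ i ∈ s, g i
        = (f a - g a) * ∏ i ∈ s, f i + g a * ((∏ i ∈ s, f i) - ∏ i ∈ s, g i) := by ring
    rw [heq]
    exact I.add_mem (I.mul_mem_right _ h1) (I.mul_mem_left _ h2)

lemma dAB_mem (n : ℕ) (i : Fin n) : deltaA n i * deltaB n i ∈ chainIdeal n := by
  apply Ideal.subset_span
  refine ⟨0, fun _ => i, ?_, ?_⟩
  · intro a b hab
    exact absurd hab (by omega)
  · simp

-- E = ∅ case
lemma wC_empty (n : ℕ) (i : Fin n) (k : Fin 3) : wC n ∅ i k = sigma3 k := by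
  simp [wC]

lemma sum_sigma : ∑ k : Fin 3, sigma3 k = 1 := by
  rw [Fin.sum_univ_three]
  norm_num [sigma3, Fin.ext_iff]

lemma SW_empty (n : ℕ) (i : Fin n) :
    SW n ∅ i = UP n i + deltaA n i * deltaB n i := by
  unfold SW
  rw [Fin.sum_univ_three]
  simp only [wC_empty]
  simp [sigma3, WP, UP, deltaA, deltaB]
  ring

lemma GE_empty_mem (n : ℕ) : GE n ∅ ∈ chainIdeal n := by
  rw [GE_eq]
  apply Ideal.mul_mem_right
  have h1 : (C (∏ i : Fin n, ∑ k, wC n ∅ i k) : MvPolynomial (LVar n) ℂ) = 1 := by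
    simp only [wC_empty, sum_sigma]
    simp
  rw [h1, mul_one]
  have := prod_sub_prod_mem (I := chainIdeal n) (s := (Finset.univ : Finset (Fin n)))
    (f := fun i => UP n i) (g := fun i => SW n ∅ i) ?_
  · exact this
  · intro i _
    show UP n i - SW n ∅ i ∈ chainIdeal n
    rw [SW_empty]
    have : UP n i - (UP n i + deltaA n i * deltaB n i) = -(deltaA n i * deltaB n i) := by ring
    rw [this]
    exact (chainIdeal n).neg_mem (dAB_mem n i)

-- site-factor computations for E ≠ ∅
lemma sum_wC_source (n : ℕ) (E : Finset (Fin n × Fin n)) (i : Fin n)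
    (h1 : i ∈ E.image Prod.fst) (h2 : i ∉ E.image Prod.snd) :
    ∑ k : Fin 3, wC n E i k = 0 := by
  unfold wC
  simp only [if_pos h1, if_neg h2]
  rw [Fin.sum_univ_three]
  norm_num [sigma3, uC, Fin.ext_iff]

lemma SW_source (n : ℕ) (E : Finset (Fin n × Fin n)) (i : Fin n)
    (h1 : i ∈ E.image Prod.fst) (h2 : i ∉ E.image Prod.snd) :
    SW n E i = deltaA n i * bP n i true := by
  unfold SW wC
  simp only [if_pos h1, if_neg h2]
  rw [Fin.sum_univ_three]
  norm_num [sigma3, uC, Fin.ext_iff, WP, deltaA]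
  ring

lemma SW_sink (n : ℕ) (E : Finset (Fin n × Fin n)) (i : Fin n)
    (h1 : i ∉ E.image Prod.fst) (h2 : i ∈ E.image Prod.snd) :
    SW n E i = deltaB n i * -aP n i false := by
  unfold SW wC
  simp only [if_neg h1, if_pos h2]
  rw [Fin.sum_univ_three]
  norm_num [sigma3, vC, Fin.ext_iff, WP, deltaB]
  ring

section Path
variable {n : ℕ}



noncomputable def extendPath (n : ℕ) (E : Finset (Fin n × Fin n)) (hE : ∀ p ∈ E, p.1 < p.2)
    (i : Fin n) : List (Fin n) :=
  if h : ∃ j, (i, j) ∈ E then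
    i :: extendPath n E hE (Classical.choose h)
  else [i]
termination_by n - i.val
decreasing_by
  have hlt : i < Classical.choose h := hE _ (Classical.choose_spec h)
  have := (Classical.choose h).isLt
  omega

lemma extendPath_ne_nil (E : Finset (Fin n × Fin n)) (hE) (i : Fin n) :
    extendPath n E hE i ≠ [] := by
  rw [extendPath]
  split <;> simp

lemma extendPath_head? (E : Finset (Fin n × Fin n)) (hE) (i : Fin n) :
    (extendPath n E hE i).head? = some i := by
  rw [extendPath]
  split <;> simp

lemma extendPath_chain (E : Finset (Fin n × Fin n)) (hE) (i : Fin n) :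
    List.Chain' (fun a b => (a, b) ∈ E) (extendPath n E hE i) := by
  induction i using extendPath.induct n E hE with
  | case1 i h ih =>
    rw [extendPath, dif_pos h]
    refine List.isChain_cons.2 ⟨?_, ih⟩
    intro y hy
    rw [extendPath_head? E hE _] at hy
    cases hy
    exact Classical.choose_spec h
  | case2 i h =>
    rw [extendPath, dif_neg h]
    exact List.isChain_singleton _

lemma extendPath_getLast? (E : Finset (Fin n × Fin n)) (hE) (i : Fin n) :
    ∀ x, (extendPath n E hE i).getLast? = some x → ∀ j, (x, j) ∉ E := by
  induction i using extendPath.induct n E hE with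
  | case1 i h ih =>
    intro x hx j
    rw [extendPath, dif_pos h, List.getLast?_cons] at hx
    have hne := extendPath_ne_nil E hE (Classical.choose h)
    rw [List.getLast?_eq_getLast hne] at hx
    simp only [Option.getD_some] at hx
    exact ih x (by rw [List.getLast?_eq_getLast hne, hx]) j
  | case2 i h =>
    intro x hx j hj
    rw [extendPath, dif_neg h] at hx
    simp at hx
    exact h ⟨j, hx ▸ hj⟩

lemma extendPath_length_ge (E : Finset (Fin n × Fin n)) (hE) (i : Fin n)
    (h : ∃ j, (i, j) ∈ E) : 2 ≤ (extendPath n E hE i).length := by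
  rw [extendPath, dif_pos h]
  have := extendPath_ne_nil E hE (Classical.choose h)
  have := List.length_pos_iff.2 this
  simp only [List.length_cons]
  omega

end Path

lemma GE_nonempty_mem (n : ℕ) (E : Finset (Fin n × Fin n))
    (hE : ∀ p ∈ E, p.1 < p.2) (hne : E.Nonempty) : GE n E ∈ chainIdeal n := by
  classical
  -- the source vertex
  have imgne : (E.image Prod.fst).Nonempty := hne.image _
  set m := (E.image Prod.fst).min' imgne with hm
  have hm1 : m ∈ E.image Prod.fst := Finset.min'_mem _ _
  have hm2 : m ∉ E.image Prod.snd := by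
    intro hmem
    obtain ⟨p, hp, hp2⟩ := Finset.mem_image.1 hmem
    have h1 : p.1 ∈ E.image Prod.fst := Finset.mem_image.2 ⟨p, hp, rfl⟩
    have := Finset.min'_le _ _ h1
    have := hE p hp
    rw [hp2] at this
    omega
  -- first factor is zero
  have hzero : (∏ i : Fin n, ∑ k, wC n E i k) = 0 :=
    Finset.prod_eq_zero (Finset.mem_univ m) (sum_wC_source n E m hm1 hm2)
  -- the path
  set L := extendPath n E hE m with hL
  have hLne : L ≠ [] := extendPath_ne_nil E hE m
  have hlpos : 0 < L.length := List.length_pos_iff.2 hLne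
  have hlen2 : 2 ≤ L.length := by
    obtain ⟨p, hp, hp1⟩ := Finset.mem_image.1 hm1
    have hp' : (p.1, p.2) ∈ E := by simpa using hp
    rw [hp1] at hp'
    exact extendPath_length_ge E hE m ⟨p.2, hp'⟩
  set l := L.length - 1 with hldef
  have hlen : L.length = l + 1 := by omega
  have hl1 : 1 ≤ l := by omega
  set idx : Fin (l + 1) → Fin n := fun k => L.get (Fin.cast hlen.symm k) with hidx
  have hchain : List.Chain' (fun a b => (a, b) ∈ E) L := extendPath_chain E hE m
  have hchainlt : List.Chain' (· < ·) L := hchain.imp fun a b h => hE _ h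
  have hpw := List.isChain_iff_pairwise.1 hchainlt
  have hget := List.pairwise_iff_get.1 hpw
  have hmono : StrictMono idx := by
    intro a b hab
    exact hget (Fin.cast hlen.symm a) (Fin.cast hlen.symm b) hab
  have hedges : ∀ k : Fin l, (idx k.castSucc, idx k.succ) ∈ E := by
    intro k
    have := List.isChain_iff_getElem.1 hchain k.val (by omega)
    convert this using 3 <;> simp [Fin.ext_iff, hidx]
  have hidx0 : idx 0 = m := by
    have h := extendPath_head? E hE m
    rw [← hL] at h
    have : L.get (Fin.cast hlen.symm 0) = L.head hLne := by
      simp [List.get_eq_getElem, List.getElem_zero]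
    rw [hidx]
    simp only [this]
    rwa [List.head?_eq_head hLne, Option.some_inj] at h
  have hlast : idx (Fin.last l) = L.getLast hLne := by
    rw [List.getLast_eq_getElem]
    show L.get _ = L.get ⟨L.length - 1, by omega⟩
    congr 1
  have hs1 : idx (Fin.last l) ∉ E.image Prod.fst := by
    intro hmem
    obtain ⟨p, hp, hp1⟩ := Finset.mem_image.1 hmem
    have := extendPath_getLast? E hE m (L.getLast hLne)
      (List.getLast?_eq_getLast hLne) p.2
    rw [← hlast] at this
    have hp' : (p.1, p.2) ∈ E := by simpa using hp
    rw [hp1] at hp'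
    exact this hp'
  have hs2 : idx (Fin.last l) ∈ E.image Prod.snd := by
    have k : Fin l := ⟨l - 1, by omega⟩
    refine Finset.mem_image.2 ⟨(idx (⟨l-1, by omega⟩ : Fin l).castSucc, idx (Fin.last l)), ?_, rfl⟩
    have := hedges ⟨l - 1, by omega⟩
    have hsucc : ((⟨l-1, by omega⟩ : Fin l)).succ = Fin.last l := by
      simp [Fin.ext_iff]; omega
    rwa [hsucc] at this
  have hne0l : idx 0 ≠ idx (Fin.last l) := by
    intro h
    have : (0 : Fin (l+1)) < Fin.last l := by
      rw [Fin.lt_def]; simp; omega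
    exact absurd (hmono this) (by rw [h]; simp)
  -- generator membership
  have hgen : deltaA n (idx 0) * (∏ k : Fin l, DeltaS n (idx k.castSucc) (idx k.succ)) *
      deltaB n (idx (Fin.last l)) ∈ chainIdeal n :=
    Ideal.subset_span ⟨l, idx, hmono, rfl⟩
  -- divisibility 1
  have dvd1 : deltaA n (idx 0) * deltaB n (idx (Fin.last l)) ∣ ∏ i : Fin n, SW n E i := by
    have hsub : ({idx 0, idx (Fin.last l)} : Finset (Fin n)) ⊆ Finset.univ :=
      Finset.subset_univ _
    rw [← Finset.prod_sdiff hsub]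
    apply Dvd.dvd.mul_left
    rw [Finset.prod_pair hne0l]
    rw [SW_source n E (idx 0) (by rw [hidx0]; exact hm1) (by rw [hidx0]; exact hm2),
        SW_sink n E (idx (Fin.last l)) hs1 hs2]
    exact ⟨bP n (idx 0) true * -aP n (idx (Fin.last l)) false, by ring⟩
  -- divisibility 2
  have dvd2 : (∏ k : Fin l, DeltaS n (idx k.castSucc) (idx k.succ)) ∣
      ∏ p ∈ E, -DeltaS n p.1 p.2 := by
    have hinj : Function.Injective (fun k : Fin l => (idx k.castSucc, idx k.succ)) := by
      intro a b hab
      have := congrArg Prod.fst hab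
      simp only at this
      have := hmono.injective this
      exact Fin.castSucc_injective l this
    have himg : (∏ k : Fin l, DeltaS n (idx k.castSucc) (idx k.succ))
        = ∏ p ∈ Finset.univ.image (fun k : Fin l => (idx k.castSucc, idx k.succ)),
            DeltaS n p.1 p.2 := by
      rw [Finset.prod_image (fun a _ b _ h => hinj h)]
    have hsub : Finset.univ.image (fun k : Fin l => (idx k.castSucc, idx k.succ)) ⊆ E := by
      intro p hp
      obtain ⟨k, _, rfl⟩ := Finset.mem_image.1 hp
      exact hedges k
    have h2 : (∏ p ∈ E, -DeltaS n p.1 p.2) = (-1) ^ E.card * ∏ p ∈ E, DeltaS n p.1 p.2 := by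
      rw [← Finset.prod_const, ← Finset.prod_mul_distrib]
      exact Finset.prod_congr rfl fun p _ => by ring
    rw [h2, himg]
    exact (Finset.prod_dvd_prod_of_subset _ _ _ hsub).mul_left _
  -- assemble
  rw [GE_eq, hzero]
  simp only [map_zero, mul_zero, zero_sub]
  obtain ⟨r, hr⟩ := mul_dvd_mul dvd1 dvd2
  have hfin : (∏ i : Fin n, SW n E i) * ∏ p ∈ E, -DeltaS n p.1 p.2
      = (deltaA n (idx 0) * (∏ k : Fin l, DeltaS n (idx k.castSucc) (idx k.succ)) *
          deltaB n (idx (Fin.last l))) * r := by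
    rw [hr]; ring
  have : -(∏ i : Fin n, SW n E i) *
      ((∏ p ∈ E, -DeltaS n p.1 p.2) *
        ∏ p ∈ (Finset.univ.filter (fun p : Fin n × Fin n => p.1 < p.2)) \ E,
          SP n p.1 p.2 true)
      = -((deltaA n (idx 0) * (∏ k : Fin l, DeltaS n (idx k.castSucc) (idx k.succ)) *
          deltaB n (idx (Fin.last l))) * r *
          ∏ p ∈ (Finset.univ.filter (fun p : Fin n × Fin n => p.1 < p.2)) \ E,
            SP n p.1 p.2 true) := by
    rw [← hfin]; ring
  rw [this]
  exact (chainIdeal n).neg_mem (Ideal.mul_mem_right _ _ (Ideal.mul_mem_right _ _ hgen))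


/-- The algebraic locality lemma: `D` lies in the chain ideal `ℐ`. -/
theorem stmt_15 (n : ℕ) (hn : 1 ≤ n) : Dpoly n ∈ chainIdeal n := by
  rw [Dsum]
  refine Ideal.sum_mem _ fun E hEp => ?_
  rcases E.eq_empty_or_nonempty with rfl | hne
  · exact GE_empty_mem n
  · exact GE_nonempty_mem n E
      (fun p hp => (Finset.mem_filter.1 (Finset.mem_powerset.1 hEp hp)).2) hne
end
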